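/- Let Z be a given 2d-th order tensor and consider the projection problem: minimize ‖X − Z‖_F² over super-symmetric X subject to Σ_{k∈K(n,d)} (d!/∏_j k_j!) X_{1^{2k_1}⋯n^{2k_n}} = 1. Then the optimal solution X* satisfies: X*_{i_1⋯i_{2d}} = Ẑ_{i_1⋯i_{2d}} for indices not of the 'all-even-multiplicity' type, and X*_{1^{2k_1}⋯n^{2k_n}} = (λ/2)·α(k,d) + Ẑ_{1^{2k_1}⋯n^{2k_n}} otherwise, where Ẑ is the symmetrization of Z, α(k,d) = (d!/∏_j k_j!)/((2d)!/∏_j (2k_j)!), and λ = 2(1 − Σ_{k} (d!/∏_j k_j!) Ẑ_{1^{2k_1}⋯n^{2k_n}}) / Σ_{k} (d!/∏_j k_j!) α(k,d). -/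

import Mathlib

/-- Super-symmetry: invariance of entries under permutations of index positions. -/
def SuperSym {ι n : Type*} (A : (ι → n) → ℝ) : Prop :=
  ∀ (σ : Equiv.Perm ι) (i : ι → n), A (i ∘ σ) = A i

/-- The canonical index of length `d + d` in which each `j : Fin n` appears `2 * k j` times
(in increasing order); when `∑ j, k j = d` this lists `j` with multiplicity `2 k_j`. -/
def repIdx (n d : ℕ) [NeZero n] (k : Fin n → ℕ) : Fin (d + d) → Fin n :=
  fun t => ((List.finRange n).flatMap fun j => List.replicate (2 * k j) j).getD t.val
    ⟨0, Nat.pos_of_ne_zero (NeZero.ne n)⟩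

/-!
The first-order condition for the projection onto `{X super-symmetric, ℓ X = 1}` says that
`X* - Z` is orthogonal to every super-symmetric `D` with `ℓ D = 0`. Testing it against the
symmetrized indicators `δ̂ᵢ` of single indices, which span the super-symmetric tensors, turns
`⟨X* - Z, δ̂ᵢ⟩` into a multiple of `X*ᵢ - Ẑᵢ` and yields one multiplier `μ` with
`X*ᵢ - Ẑᵢ = μ ℓ(δ̂ᵢ)` for all `i`. Now `ℓ(δ̂ᵢ)` vanishes unless every value occurs an even number
of times in `i`, and equals `(2d)! α(k,d)` at `i = 1^{2k₁}⋯n^{2kₙ}`; the constraint `ℓ X* = 1`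
then pins down `μ (2d)! = λ / 2`.
-/

open Finset Equiv

theorem sum_sub_mul_eq_zero_of_forall_sum_sq_le {ι : Type*} [Fintype ι] {x z v : ι → ℝ}
    (h : ∀ t : ℝ, ∑ i, (x i - z i) ^ 2 ≤ ∑ i, (x i + t * v i - z i) ^ 2) :
    ∑ i, (x i - z i) * v i = 0 := by
  set a := ∑ i, (x i - z i) * v i
  set b := ∑ i, v i ^ 2
  have hb : 0 ≤ b := sum_nonneg fun i _ => sq_nonneg _
  have hquad : ∀ t : ℝ, 0 ≤ 2 * t * a + t ^ 2 * b := fun t => by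
    have := h t
    have expand : ∑ i, (x i + t * v i - z i) ^ 2
        = ∑ i, (x i - z i) ^ 2 + (2 * t * a + t ^ 2 * b) := by
      simp only [a, b, mul_sum, ← sum_add_distrib]
      exact sum_congr rfl fun i _ => by ring
    linarith
  -- at `t = -a / (b + 1)` the quadratic equals `-a² (b + 2) / (b + 1)²`
  have := hquad (-a / (b + 1))
  have hb1 : 0 < b + 1 := by linarith
  rw [div_pow, neg_sq] at this
  field_simp at this
  nlinarith [sq_nonneg a]

theorem eq_div_of_forall_mem_eq_mul_add {κ : Type*} {s : Finset κ} {w a x z : κ → ℝ} {c : ℝ}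
    (hx : ∀ k ∈ s, x k = c * a k + z k) (h1 : ∑ k ∈ s, w k * x k = 1)
    (ha : ∑ k ∈ s, w k * a k ≠ 0) :
    c = (1 - ∑ k ∈ s, w k * z k) / ∑ k ∈ s, w k * a k := by
  rw [eq_div_iff ha, ← h1, ← sum_sub_distrib, mul_sum]
  exact sum_congr rfl fun k hk => by rw [hx k hk]; ring

theorem SuperSym.add {α β : Type*} {A B : (α → β) → ℝ} (hA : SuperSym A) (hB : SuperSym B) :
    SuperSym (A + B) := fun σ i => by simp [hA σ i, hB σ i]

theorem SuperSym.sub {α β : Type*} {A B : (α → β) → ℝ} (hA : SuperSym A) (hB : SuperSym B) :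
    SuperSym (A - B) := fun σ i => by simp [hA σ i, hB σ i]

theorem SuperSym.smul {α β : Type*} {A : (α → β) → ℝ} (c : ℝ) (hA : SuperSym A) :
    SuperSym (c • A) := fun σ i => by simp [hA σ i]

section Symmetrization

variable {α β : Type*} [Fintype α] [DecidableEq α]

noncomputable def symmetrize (Z : (α → β) → ℝ) (i : α → β) : ℝ :=
  (∑ σ : Perm α, Z (i ∘ σ)) / ((Fintype.card α).factorial : ℝ)

theorem SuperSym.sum_perm_comp {X : (α → β) → ℝ} (hX : SuperSym X) (i : α → β) :
    ∑ σ : Perm α, X (i ∘ σ) = (Fintype.card α).factorial * X i := by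
  simp [hX _ i, Fintype.card_perm]

variable [DecidableEq β]

/-- `(card α)!` times the symmetrization of the indicator tensor of the index `i₀`. -/
def symDelta (i₀ : α → β) (i : α → β) : ℝ := #{σ : Perm α | i ∘ σ = i₀}

theorem superSym_symDelta (i₀ : α → β) : SuperSym (symDelta i₀) := by
  intro σ i
  unfold symDelta
  congr 1
  refine card_bij' (fun τ _ => σ * τ) (fun τ _ => σ⁻¹ * τ) ?_ ?_ ?_ ?_ <;> intro τ hτ
  · simpa [Function.comp_def] using hτ
  · simpa [Function.comp_def] using hτ
  · simp
  · simp

theorem sum_mul_symDelta [Fintype β] (W : (α → β) → ℝ) (i₀ : α → β) :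
    ∑ i, W i * symDelta i₀ i = ∑ σ : Perm α, W (i₀ ∘ σ) := by
  have hcomp : ∀ (i : α → β) (σ : Perm α), i ∘ σ = i₀ ↔ i = i₀ ∘ ⇑σ⁻¹ := fun i σ => by
    constructor <;> rintro rfl <;> ext <;> simp
  simp_rw [symDelta, card_filter, Nat.cast_sum, mul_sum, hcomp]
  rw [sum_comm]
  simp only [Nat.cast_ite, Nat.cast_one, Nat.cast_zero, mul_ite, mul_one, mul_zero, sum_ite_eq',
    mem_univ, if_true]
  exact Fintype.sum_equiv (Equiv.inv _) _ _ fun σ => rfl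

theorem symDelta_eq_zero_of_card_ne {i₀ i : α → β} {j : β}
    (h : #{t | i t = j} ≠ #{t | i₀ t = j}) : symDelta i₀ i = 0 := by
  rw [symDelta, filter_eq_empty_iff.2, card_empty, Nat.cast_zero]
  rintro σ - rfl
  exact h (card_bij' (fun t _ => σ⁻¹ t) (fun t _ => σ t) (by simp) (by simp) (by simp) (by simp))

theorem symDelta_self [Fintype β] (i₀ : α → β) :
    symDelta i₀ i₀ = ∏ j, ((#{t | i₀ t = j} : ℕ).factorial : ℝ) := by
  rw [symDelta, ← Fintype.card_subtype, DomMulAct.stabilizer_card]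
  push_cast
  simp [Fintype.card_subtype]

end Symmetrization

theorem exists_multiplier_of_superSym_minimizer {α β : Type*} [Fintype α] [DecidableEq α]
    [Fintype β] [DecidableEq β] (ℓ : ((α → β) → ℝ) →ₗ[ℝ] ℝ) {X₀ Z : (α → β) → ℝ}
    (hX₀ : SuperSym X₀)
    (hopt : ∀ X, SuperSym X → ℓ X = ℓ X₀ → ∑ i, (X₀ i - Z i) ^ 2 ≤ ∑ i, (X i - Z i) ^ 2) :
    ∃ μ : ℝ, ∀ i₀, X₀ i₀ - symmetrize Z i₀ = μ * ℓ (symDelta i₀) := by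
  have horth : ∀ D, SuperSym D → ℓ D = 0 → ∑ i, (X₀ i - Z i) * D i = 0 := fun D hD hℓ =>
    sum_sub_mul_eq_zero_of_forall_sum_sq_le fun t =>
      hopt (X₀ + t • D) (hX₀.add (hD.smul t)) (by simp [hℓ])
  have hN : ((Fintype.card α).factorial : ℝ) ≠ 0 := by positivity
  have hinner : ∀ i₀, ∑ i, (X₀ i - Z i) * symDelta i₀ i
      = (Fintype.card α).factorial * (X₀ i₀ - symmetrize Z i₀) := fun i₀ => by
    rw [sum_mul_symDelta, sum_sub_distrib, hX₀.sum_perm_comp, symmetrize]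
    field_simp
  by_cases hℓ : ∃ i₁, ℓ (symDelta i₁) ≠ 0
  · obtain ⟨i₁, hi₁⟩ := hℓ
    refine ⟨(X₀ i₁ - symmetrize Z i₁) / ℓ (symDelta i₁), fun i₀ => ?_⟩
    -- test against the symmetric direction `ℓ(δ₁) δ₀ - ℓ(δ₀) δ₁`, which keeps `ℓ` fixed
    have h := horth (ℓ (symDelta i₁) • symDelta i₀ - ℓ (symDelta i₀) • symDelta i₁)
      (((superSym_symDelta i₀).smul _).sub ((superSym_symDelta i₁).smul _))
      (by simp only [map_sub, map_smul, smul_eq_mul]; ring)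
    simp only [Pi.sub_apply, Pi.smul_apply, smul_eq_mul, mul_sub, sum_sub_distrib,
      mul_left_comm _ (ℓ _), ← mul_sum, hinner] at h
    field_simp
    apply mul_left_cancel₀ hN
    linear_combination h
  · push Not at hℓ
    refine ⟨0, fun i₀ => ?_⟩
    have h := horth _ (superSym_symDelta i₀) (hℓ i₀)
    rw [hinner] at h
    simpa [hN, sub_eq_zero] using h

theorem card_filter_repIdx_eq {n d : ℕ} [NeZero n] {k : Fin n → ℕ} (hk : ∑ j, k j = d)
    (j : Fin n) : #{t | repIdx n d k t = j} = 2 * k j := by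
  set L := (List.finRange n).flatMap fun j => List.replicate (2 * k j) j
  have hlen : L.length = d + d := by
    simp [L, List.length_flatMap, ← Fin.sum_univ_def, hk, two_mul]
  have hget : ∀ t, repIdx n d k t = List.Vector.get (⟨L, hlen⟩ : List.Vector (Fin n) (d + d)) t :=
    fun t => by
      have ht : t.val < L.length := hlen.symm ▸ t.isLt
      rw [repIdx, List.getD_eq_getElem?_getD, List.getElem?_eq_getElem ht]
      rfl
  have hcount := Fin.card_filter_univ_eq_vector_get_eq_count j (⟨L, hlen⟩ : List.Vector _ _)
  simp only [← hget] at hcount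
  rw [hcount]
  change L.count j = _
  rw [List.count_flatMap, ← Fin.sum_univ_def]
  simp [List.count_replicate]

def evenConstraint (n d : ℕ) [NeZero n] (K : Finset (Fin n → Fin (d + 1))) :
    ((Fin (d + d) → Fin n) → ℝ) →ₗ[ℝ] ℝ where
  toFun X := ∑ k ∈ K, (Nat.multinomial univ (fun j => (k j : ℕ)) : ℝ)
    * X (repIdx n d fun j => (k j : ℕ))
  map_add' X Y := by simp only [Pi.add_apply, mul_add, sum_add_distrib]
  map_smul' c X := by
    simp only [Pi.smul_apply, smul_eq_mul, RingHom.id_apply, mul_sum, mul_left_comm]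

section EvenConstraint

variable {n d : ℕ} [NeZero n] {K : Finset (Fin n → Fin (d + 1))}

theorem evenConstraint_symDelta_of_not_even (hK : ∀ k ∈ K, ∑ j, (k j : ℕ) = d)
    {i₀ : Fin (d + d) → Fin n} (h : ¬ ∀ j, Even #{t | i₀ t = j}) :
    evenConstraint n d K (symDelta i₀) = 0 := by
  obtain ⟨j, hj⟩ := not_forall.1 h
  refine sum_eq_zero fun k hk => ?_
  rw [symDelta_eq_zero_of_card_ne (j := j), mul_zero]
  rw [card_filter_repIdx_eq (hK k hk)]
  intro heq
  exact hj (heq ▸ even_two_mul _)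

theorem evenConstraint_symDelta_repIdx (hK : ∀ k ∈ K, ∑ j, (k j : ℕ) = d)
    {k₀ : Fin n → Fin (d + 1)} (hk₀ : k₀ ∈ K) :
    evenConstraint n d K (symDelta (repIdx n d fun j => (k₀ j : ℕ)))
      = (d + d).factorial * ((Nat.multinomial univ (fun j => (k₀ j : ℕ)) : ℝ)
        / Nat.multinomial univ (fun j => 2 * (k₀ j : ℕ))) := by
  have hcard := fun k (hk : k ∈ K) => card_filter_repIdx_eq (hK k hk)
  rw [evenConstraint, LinearMap.coe_mk, AddHom.coe_mk, sum_eq_single_of_mem k₀ hk₀]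
  · rw [symDelta_self]
    simp_rw [hcard k₀ hk₀]
    have hspec := Nat.multinomial_spec univ (fun j => 2 * (k₀ j : ℕ))
    rw [← mul_sum, hK k₀ hk₀, two_mul] at hspec
    have hm : (Nat.multinomial univ (fun j => 2 * (k₀ j : ℕ)) : ℝ) ≠ 0 := by
      exact_mod_cast (Nat.multinomial_pos _ _).ne'
    rw [← hspec]
    push_cast
    field_simp
  · intro k hk hne
    obtain ⟨j, hj⟩ : ∃ j, k j ≠ k₀ j := Function.ne_iff.1 hne
    rw [symDelta_eq_zero_of_card_ne (j := j), mul_zero]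
    rw [hcard k hk, hcard k₀ hk₀]
    omega

end EvenConstraint

/-- KKT characterization of the projection of a 2d-th order tensor `Z` onto the affine slice
of super-symmetric tensors with `∑_{k∈K(n,d)} (d!/∏ k_j!) X_{1^{2k_1}⋯n^{2k_n}} = 1`:
off the all-even-multiplicity indices the projection agrees with the symmetrization `Ẑ`,
and on them it is shifted by `(λ/2)·α(k,d)` with the explicit multiplier `λ`. -/
theorem stmt17 {n d : ℕ} [NeZero n]
    (Z Zhat : (Fin (d + d) → Fin n) → ℝ)
    (hZhat : Zhat = fun i =>
        (∑ σ : Equiv.Perm (Fin (d + d)), Z (i ∘ σ)) / (Nat.factorial (d + d) : ℝ))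
    (alpha : (Fin n → ℕ) → ℝ)
    (halpha : alpha = fun k => (Nat.multinomial Finset.univ k : ℝ) /
        (Nat.multinomial Finset.univ (fun j => 2 * k j) : ℝ))
    (K : Finset (Fin n → Fin (d + 1)))
    (hK : K = Finset.univ.filter (fun k => ∑ j, (k j : ℕ) = d))
    (lam : ℝ)
    (hlam : lam = 2 * (1 - ∑ k ∈ K, (Nat.multinomial Finset.univ (fun j => (k j : ℕ)) : ℝ)
          * Zhat (repIdx n d fun j => (k j : ℕ)))
        / ∑ k ∈ K, (Nat.multinomial Finset.univ (fun j => (k j : ℕ)) : ℝ)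
          * alpha (fun j => (k j : ℕ)))
    (Xstar : (Fin (d + d) → Fin n) → ℝ)
    (hXfeas : SuperSym Xstar ∧
        ∑ k ∈ K, (Nat.multinomial Finset.univ (fun j => (k j : ℕ)) : ℝ)
          * Xstar (repIdx n d fun j => (k j : ℕ)) = 1)
    (hXopt : ∀ X : (Fin (d + d) → Fin n) → ℝ, SuperSym X →
        ∑ k ∈ K, (Nat.multinomial Finset.univ (fun j => (k j : ℕ)) : ℝ)
          * X (repIdx n d fun j => (k j : ℕ)) = 1 →
        ∑ i : Fin (d + d) → Fin n, (Xstar i - Z i) ^ 2 ≤ ∑ i, (X i - Z i) ^ 2) :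
    (∀ i : Fin (d + d) → Fin n,
        ¬ (∀ j : Fin n, Even (Finset.univ.filter (fun t => i t = j)).card) →
        Xstar i = Zhat i)
    ∧ ∀ k ∈ K, Xstar (repIdx n d fun j => (k j : ℕ))
        = lam / 2 * alpha (fun j => (k j : ℕ))
          + Zhat (repIdx n d fun j => (k j : ℕ)) := by
  obtain ⟨hXsym, hXcon⟩ := hXfeas
  have hKd : ∀ k ∈ K, ∑ j, (k j : ℕ) = d := fun k hk => by simpa [hK] using hk
  have hsymm : symmetrize Z = Zhat := by
    rw [hZhat]
    ext i
    simp [symmetrize]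
  obtain ⟨μ, hμ⟩ := exists_multiplier_of_superSym_minimizer (evenConstraint n d K) hXsym
    fun X hX hℓ => hXopt X hX (hℓ.trans hXcon)
  rw [hsymm] at hμ
  refine ⟨fun i hi => by simpa [evenConstraint_symDelta_of_not_even hKd hi, sub_eq_zero] using hμ i,
    fun k hk => ?_⟩
  have hrep : ∀ k ∈ K, Xstar (repIdx n d fun j => (k j : ℕ))
      = μ * (d + d).factorial * alpha (fun j => (k j : ℕ)) + Zhat (repIdx n d fun j => (k j : ℕ)) :=
    fun k hk => by
      rw [halpha, mul_assoc, ← evenConstraint_symDelta_repIdx hKd hk, ← hμ]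
      ring
  have hpos : 0 < ∑ k ∈ K, (Nat.multinomial univ (fun j => (k j : ℕ)) : ℝ)
      * alpha (fun j => (k j : ℕ)) := by
    refine sum_pos (fun k _ => ?_) ⟨k, hk⟩
    have hm : ∀ f : Fin n → ℕ, (0 : ℝ) < Nat.multinomial univ f := fun f => by
      exact_mod_cast Nat.multinomial_pos _ _
    rw [halpha]
    exact mul_pos (hm _) (div_pos (hm _) (hm _))
  have hmult := eq_div_of_forall_mem_eq_mul_add hrep hXcon hpos.ne'
  rw [hrep k hk, hlam, mul_div_assoc, ← hmult]
  ring
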